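/- arXiv:1809.04670 — 4 statements merged into one kernel-verified Lean document; each statement's English description precedes it below -/
import Mathlib

section
/- The group μ_L of roots of unity contained in L = ℚ^(2) is finite. -/
/-!
Every automorphism `σ` of `ℚ̄` maps an extension `F` of degree at most 2 onto itself, and
`Aut(F/ℚ)` has order at most 2, so `σ²` fixes `F`; hence `σ²` fixes `ℚ^(2)` pointwise.
If `ζ ∈ ℚ^(2)` has order `m`, every `u` prime to `m` is realised by some `σ` with `σ ζ = ζ ^ u`
(all primitive `m`-th roots share the minimal polynomial `Φₘ`), so `u² ≡ 1 [MOD m]`.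
Thus `(ℤ/m)ˣ` has exponent 2, which forces `m ∣ 24`, and all roots of unity of `ℚ^(2)`
are among the 24th roots of unity.
-/

/-- `ℚ^(2)`: the compositum, inside a fixed algebraic closure of `ℚ`, of all extensions
of `ℚ` of degree at most 2. -/
noncomputable def Qsqrt2 : IntermediateField ℚ (AlgebraicClosure ℚ) :=
  ⨆ F ∈ {F : IntermediateField ℚ (AlgebraicClosure ℚ) | Module.rank ℚ F ≤ 2}, F

open Polynomial IntermediateField

theorem ZMod.dvd_24_of_forall_units_sq_eq_one {m : ℕ} [NeZero m]
    (h : ∀ u : (ZMod m)ˣ, u ^ 2 = 1) : m ∣ 24 := by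
  -- `5 ∣ m` is impossible as `(ZMod m)ˣ ↠ (ZMod 5)ˣ`, of exponent 4; otherwise `5² = 1` in `ZMod m`.
  by_cases h5 : 5 ∣ m
  · have h5sq : ∀ v : (ZMod 5)ˣ, v ^ 2 = 1 := fun v => by
      obtain ⟨u, rfl⟩ := ZMod.unitsMap_surjective h5 v
      rw [← map_pow, h u, map_one]
    exact absurd (h5sq (ZMod.unitOfCoprime 2 (by norm_num))) (by decide)
  · have h25 := congrArg Units.val
      (h (ZMod.unitOfCoprime 5 ((Nat.Prime.coprime_iff_not_dvd (by norm_num)).mpr h5)))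
    rw [← ZMod.natCast_eq_zero_iff]
    simp only [Units.val_pow_eq_pow_val, Units.val_one, ZMod.coe_unitOfCoprime] at h25
    push_cast at h25 ⊢
    linear_combination h25

theorem sq_eq_one_of_card_le_two {G : Type*} [Group G] [Fintype G]
    (hG : Fintype.card G ≤ 2) (g : G) : g ^ 2 = 1 := by
  have hdvd : Fintype.card G ∣ 2 := by
    interval_cases h : Fintype.card G
    · exact absurd h Fintype.card_ne_zero
    all_goals norm_num
  exact orderOf_dvd_iff_pow_eq_one.mp (orderOf_dvd_card.trans hdvd)

theorem IntermediateField.sq_mem_fixingSubgroup_of_finrank_le_two {K E : Type*} [Field K]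
    [Field E] [Algebra K E] {F : IntermediateField K E} [FiniteDimensional K F]
    (hF : Module.finrank K F ≤ 2) (σ : Gal(E/K)) : σ ^ 2 ∈ F.fixingSubgroup := by
  obtain hF1 | hF2 : Module.finrank K F = 1 ∨ Module.finrank K F = 2 := by
    have := Module.finrank_pos (R := K) (M := F); omega
  · rw [finrank_eq_one_iff.mp hF1, fixingSubgroup_bot]
    exact Subgroup.mem_top _
  · have : Algebra.IsQuadraticExtension K F := ⟨hF2⟩
    rw [← restrictNormalHom_ker, MonoidHom.mem_ker, map_pow]
    exact sq_eq_one_of_card_le_two (hF2 ▸ AlgEquiv.card_le) _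

theorem sq_mem_fixingSubgroup_Qsqrt2 (σ : Gal(AlgebraicClosure ℚ/ℚ)) :
    σ ^ 2 ∈ Qsqrt2.fixingSubgroup := by
  rw [← Subgroup.zpowers_le, ← le_iff_le]
  refine iSup₂_le fun F (hF : Module.rank ℚ F ≤ 2) => ?_
  have : FiniteDimensional ℚ F :=
    Module.rank_lt_aleph0_iff.mp (hF.trans_lt Cardinal.ofNat_lt_aleph0)
  rw [le_iff_le, Subgroup.zpowers_le]
  exact sq_mem_fixingSubgroup_of_finrank_le_two (Module.finrank_le_of_rank_le hF) σ

/-- `Qsqrt2` and `Gal(AlgebraicClosure ℚ/ℚ)` use the ℚ-algebra structure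
`DivisionRing.toRatAlgebra`, which is not definitionally `AlgebraicClosure.instAlgebra ℚ`, so
`IsAlgClosure.normal` does not apply as is. -/
instance AlgebraicClosure.normal_rat : Normal ℚ (AlgebraicClosure ℚ) := by
  convert @IsAlgClosure.normal ℚ _ _ _ (AlgebraicClosure.instAlgebra ℚ) _
  exact Subsingleton.elim _ _

theorem IsPrimitiveRoot.exists_algEquiv_apply_eq_pow {L : Type*} [Field L] [CharZero L]
    [Normal ℚ L] {ζ : L} {m : ℕ} [NeZero m] (hζ : IsPrimitiveRoot ζ m) {u : ℕ}
    (hu : u.Coprime m) : ∃ σ : Gal(L/ℚ), σ ζ = ζ ^ u := by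
  have hm := Nat.pos_of_ne_zero (NeZero.ne m)
  refine IsConjRoot.exists_algEquiv ?_
  rw [IsConjRoot, ← cyclotomic_eq_minpoly_rat hζ hm,
    ← cyclotomic_eq_minpoly_rat (hζ.pow_of_coprime u hu) hm]

theorem orderOf_dvd_24_of_forall_sq_apply_eq_self {L : Type*} [Field L] [CharZero L]
    [Normal ℚ L] {ζ : L} (hζ : IsOfFinOrder ζ) (h : ∀ σ : Gal(L/ℚ), (σ ^ 2) ζ = ζ) :
    orderOf ζ ∣ 24 := by
  have : NeZero (orderOf ζ) := ⟨hζ.orderOf_pos.ne'⟩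
  refine ZMod.dvd_24_of_forall_units_sq_eq_one fun u => Units.ext ?_
  obtain ⟨σ, hσ⟩ :=
    (IsPrimitiveRoot.orderOf ζ).exists_algEquiv_apply_eq_pow (ZMod.val_coe_unit_coprime u)
  have hu : ζ ^ ((u : ZMod (orderOf ζ)).val ^ 2) = ζ ^ 1 := by
    rw [pow_one, sq, pow_mul, ← hσ, ← map_pow, ← hσ, ← AlgEquiv.mul_apply, ← sq, h]
  rw [hζ.pow_eq_pow_iff_modEq, ← ZMod.natCast_eq_natCast_iff] at hu
  simpa using hu

/-- The group of roots of unity of `L = ℚ^(2)` is finite. -/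
theorem rootsOfUnity_Qsqrt2_finite :
    {x : ↥Qsqrt2 | ∃ n : ℕ, 0 < n ∧ x ^ n = 1}.Finite := by
  refine (nthRootsFinset 24 (1 : Qsqrt2)).finite_toSet.subset fun x hroot => ?_
  rw [Finset.mem_coe, mem_nthRootsFinset (by norm_num)]
  have hx : IsOfFinOrder (x : AlgebraicClosure ℚ) :=
    Qsqrt2.val.toMonoidHom.isOfFinOrder (isOfFinOrder_iff_pow_eq_one.mpr hroot)
  have h24 := orderOf_dvd_iff_pow_eq_one.mp <| orderOf_dvd_24_of_forall_sq_apply_eq_self hx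
    fun σ => (mem_fixingSubgroup_iff _ _).mp (sq_mem_fixingSubgroup_Qsqrt2 σ) x x.2
  exact Subtype.ext h24
end

section
/- Let N be the order of the (finite) group μ_L of roots of unity of L = ℚ^(2). If u is a unit of the ring of integers O_L of L (i.e. both u and u⁻¹ are integral over ℤ), then u^{2N} lies in K = ℚ({√p : p prime}) and is a unit of the ring of integers O_K of K. -/
/-- `K = ℚ({√p : p prime})`: the subfield of a fixed algebraic closure of `ℚ` generated
by the square roots of all rational primes. -/
noncomputable def Ksqrt : IntermediateField ℚ (AlgebraicClosure ℚ) :=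
  IntermediateField.adjoin ℚ
    {x : AlgebraicClosure ℚ | ∃ p : ℕ, p.Prime ∧ x ^ 2 = (p : AlgebraicClosure ℚ)}

open Polynomial IntermediateField

local notation "Qbar" => AlgebraicClosure ℚ

lemma mem_Qsqrt2_of_quad {x : Qbar} (b c : ℚ) (h : x ^ 2 = (b : Qbar) * x + (c : Qbar)) :
    x ∈ Qsqrt2 := by
  have haev : (aeval x) ((X : ℚ[X]) ^ 2 - (C b * X + C c)) = 0 := by
    simp only [map_sub, map_add, map_mul, map_pow, aeval_X, aeval_C]
    rw [show (algebraMap ℚ Qbar) b = (b : Qbar) from eq_ratCast _ b,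
      show (algebraMap ℚ Qbar) c = (c : Qbar) from eq_ratCast _ c, h]
    ring
  have hmon : ((X : ℚ[X]) ^ 2 - (C b * X + C c)).Monic :=
    monic_X_pow_sub ((show degree (C b * X + C c : ℚ[X]) ≤ 1 by compute_degree).trans_lt
      (by norm_num))
  have hint : IsIntegral ℚ x := ⟨_, hmon, by rwa [← aeval_def]⟩
  have hfd : FiniteDimensional ℚ ℚ⟮x⟯ := adjoin.finiteDimensional hint
  have hrank : Module.rank ℚ ℚ⟮x⟯ ≤ 2 := by
    rw [← Module.finrank_eq_rank, adjoin.finrank hint]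
    have h2 : ((X : ℚ[X]) ^ 2 - (C b * X + C c)) ≠ 0 := hmon.ne_zero
    have h3 : ((X : ℚ[X]) ^ 2 - (C b * X + C c)).natDegree = 2 := by compute_degree!
    have h4 := natDegree_le_natDegree (minpoly.degree_le_of_ne_zero ℚ x h2 haev)
    rw [h3] at h4
    exact_mod_cast Nat.cast_le.2 h4
  exact (le_iSup₂ (f := fun (F : IntermediateField ℚ Qbar) (_ : Module.rank ℚ F ≤ 2) => F)
    ℚ⟮x⟯ hrank) (mem_adjoin_simple_self ℚ x)

lemma quad_of_mem {F : IntermediateField ℚ Qbar} (hF : Module.rank ℚ F ≤ 2) {x : Qbar}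
    (hx : x ∈ F) : ∃ b c : ℚ, x ^ 2 = (b : Qbar) * x + (c : Qbar) := by
  set X : F := ⟨x, hx⟩ with hX
  have hnli : ¬ LinearIndependent ℚ ![(1 : F), X, X ^ 2] := by
    intro h
    have := h.cardinal_le_rank
    rw [Cardinal.mk_fintype] at this
    simp at this
    have := this.trans hF
    norm_num at this
  rw [Fintype.not_linearIndependent_iff] at hnli
  obtain ⟨g, hg, i, hgi⟩ := hnli
  rw [Fin.sum_univ_three] at hg
  simp only [Matrix.cons_val_zero, Matrix.cons_val_one, Matrix.head_cons,
    Matrix.cons_val_two, Matrix.tail_cons] at hg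
  rw [Rat.smul_def, Rat.smul_def, Rat.smul_def, mul_one] at hg
  have hgQ : (g 0 : Qbar) + (g 1 : Qbar) * x + (g 2 : Qbar) * x ^ 2 = 0 := by
    have h0 := congrArg (fun y : F => (y : Qbar)) hg
    push_cast at h0
    exact h0
  by_cases h2 : g 2 ≠ 0
  · refine ⟨-(g 1 / g 2), -(g 0 / g 2), ?_⟩
    have hg2Q : ((g 2 : ℚ) : Qbar) ≠ 0 := Rat.cast_ne_zero.2 h2
    push_cast
    field_simp
    linear_combination hgQ
  · push_neg at h2
    rw [h2, Rat.cast_zero, zero_mul, add_zero] at hgQ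
    by_cases h1 : g 1 ≠ 0
    · refine ⟨-(g 0 / g 1), 0, ?_⟩
      have hg1Q : ((g 1 : ℚ) : Qbar) ≠ 0 := Rat.cast_ne_zero.2 h1
      have hxv : x = ((-(g 0 / g 1) : ℚ) : Qbar) := by
        push_cast
        field_simp
        linear_combination hgQ
      rw [hxv]
      push_cast
      ring
    · push_neg at h1
      rw [h1, Rat.cast_zero, zero_mul, add_zero] at hgQ
      rw [Rat.cast_eq_zero] at hgQ
      fin_cases i
      · exact absurd hgQ hgi
      · exact absurd h1 hgi
      · exact absurd h2 hgi
-- continuing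
section Part2
variable {τ σc : AlgebraicClosure ℚ →+* AlgebraicClosure ℚ}

/-- preimage of Qsqrt2 under a ring endomorphism, as an intermediate field -/
noncomputable def preQ (τ : AlgebraicClosure ℚ →+* AlgebraicClosure ℚ) :
    IntermediateField ℚ (AlgebraicClosure ℚ) where
  carrier := {x | τ x ∈ Qsqrt2}
  mul_mem' ha hb := by simp only [Set.mem_setOf_eq, map_mul] at *; exact mul_mem ha hb
  add_mem' ha hb := by simp only [Set.mem_setOf_eq, map_add] at *; exact add_mem ha hb
  one_mem' := by simp only [Set.mem_setOf_eq, map_one]; exact one_mem _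
  zero_mem' := by simp only [Set.mem_setOf_eq, map_zero]; exact zero_mem _
  algebraMap_mem' q := by
    simp only [Set.mem_setOf_eq, eq_ratCast, map_ratCast]
    exact SubfieldClass.ratCast_mem Qsqrt2 q
  inv_mem' x hx := by simp only [Set.mem_setOf_eq, map_inv₀] at *; exact inv_mem hx

/-- the set of points where τ ∘ τ is the identity, as an intermediate field -/
noncomputable def fixQ (τ : AlgebraicClosure ℚ →+* AlgebraicClosure ℚ) :
    IntermediateField ℚ (AlgebraicClosure ℚ) where
  carrier := {x | τ (τ x) = x}
  mul_mem' ha hb := by simp only [Set.mem_setOf_eq, map_mul] at *; rw [ha, hb]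
  add_mem' ha hb := by simp only [Set.mem_setOf_eq, map_add] at *; rw [ha, hb]
  one_mem' := by simp only [Set.mem_setOf_eq, map_one]
  zero_mem' := by simp only [Set.mem_setOf_eq, map_zero]
  algebraMap_mem' q := by simp only [Set.mem_setOf_eq, eq_ratCast, map_ratCast]
  inv_mem' x hx := by simp only [Set.mem_setOf_eq, map_inv₀] at *; rw [hx]

lemma Qsqrt2_le_preQ (τ : AlgebraicClosure ℚ →+* AlgebraicClosure ℚ) : Qsqrt2 ≤ preQ τ := by
  refine iSup₂_le fun F hF => fun x hx => ?_
  obtain ⟨b, c, h⟩ := quad_of_mem hF hx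
  have h1 : (τ x) ^ 2 = (b : Qbar) * τ x + (c : Qbar) := by
    have := congrArg τ h
    simpa only [map_pow, map_add, map_mul, map_ratCast] using this
  exact mem_Qsqrt2_of_quad b c h1

lemma map_mem_Qsqrt2 (τ : AlgebraicClosure ℚ →+* AlgebraicClosure ℚ) {x : Qbar}
    (hx : x ∈ Qsqrt2) : τ x ∈ Qsqrt2 := Qsqrt2_le_preQ τ hx

lemma Qsqrt2_le_fixQ (τ : AlgebraicClosure ℚ →+* AlgebraicClosure ℚ) : Qsqrt2 ≤ fixQ τ := by
  refine iSup₂_le fun F hF => fun x hx => ?_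
  obtain ⟨b, c, h⟩ := quad_of_mem hF hx
  have h1 : (τ x) ^ 2 = (b : Qbar) * τ x + (c : Qbar) := by
    have := congrArg τ h
    simpa only [map_pow, map_add, map_mul, map_ratCast] using this
  have hfac : (τ x - x) * (τ x + x - (b : Qbar)) = 0 := by linear_combination h1 - h
  rcases mul_eq_zero.1 hfac with h2 | h2
  · have h3 : τ x = x := by linear_combination h2
    show τ (τ x) = x
    rw [h3, h3]
  · have h3 : τ x = (b : Qbar) - x := by linear_combination h2
    show τ (τ x) = x
    rw [h3, map_sub, map_ratCast, h3]
    ring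

lemma invol_Qsqrt2 (τ : AlgebraicClosure ℚ →+* AlgebraicClosure ℚ) {x : Qbar}
    (hx : x ∈ Qsqrt2) : τ (τ x) = x := Qsqrt2_le_fixQ τ hx

lemma comm_Qsqrt2 (σ c : AlgebraicClosure ℚ →+* AlgebraicClosure ℚ) {x : Qbar}
    (hx : x ∈ Qsqrt2) : σ (c x) = c (σ x) := by
  have hcx : c x ∈ Qsqrt2 := map_mem_Qsqrt2 c hx
  have hscx : σ (c x) ∈ Qsqrt2 := map_mem_Qsqrt2 σ hcx
  have hcscx : c (σ (c x)) ∈ Qsqrt2 := map_mem_Qsqrt2 c hscx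
  have h1 : σ (c (σ (c x))) = x := invol_Qsqrt2 (σ.comp c) hx
  have h2 : σ (σ (c (σ (c x)))) = σ x := congrArg σ h1
  rw [invol_Qsqrt2 σ hcscx] at h2
  have h3 := congrArg c h2
  rw [invol_Qsqrt2 c hscx] at h3
  exact h3
end Part2
section Part3

instance : Algebra.IsAlgebraic ℚ (AlgebraicClosure ℚ) := AlgebraicClosure.isAlgebraic ℚ

/-- a fixed embedding of the algebraic closure of ℚ into ℂ -/
noncomputable def jC : AlgebraicClosure ℚ →ₐ[ℚ] ℂ := IsAlgClosed.lift

lemma jC_inj : Function.Injective jC := jC.toRingHom.injective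

lemma exists_jC_eq (ψ : AlgebraicClosure ℚ →+* ℂ) (x : AlgebraicClosure ℚ) :
    ∃ y, jC y = ψ x := by
  have hx : IsIntegral ℚ x := (Algebra.IsAlgebraic.isAlgebraic (R := ℚ) x).isIntegral
  set m := minpoly ℚ x with hm
  have hm0 : m ≠ 0 := minpoly.ne_zero hx
  have hroot : ψ x ∈ m.rootSet ℂ := by
    rw [Polynomial.mem_rootSet]
    refine ⟨hm0, ?_⟩
    have : (Polynomial.aeval (ψ.toRatAlgHom x)) m = 0 := by
      rw [Polynomial.aeval_algHom_apply ψ.toRatAlgHom x m, minpoly.aeval, map_zero]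
    exact this
  have himg : jC '' (m.rootSet (AlgebraicClosure ℚ)) = m.rootSet ℂ :=
    Polynomial.Splits.image_rootSet (IsAlgClosed.splits _) jC
  rw [← himg] at hroot
  obtain ⟨y, _, hy⟩ := hroot
  exact ⟨y, hy⟩

/-- descend an embedding `Qbar → ℂ` to an endomorphism of `Qbar` through `jC` -/
noncomputable def desc (ψ : AlgebraicClosure ℚ →+* ℂ) :
    AlgebraicClosure ℚ →+* AlgebraicClosure ℚ where
  toFun x := (exists_jC_eq ψ x).choose
  map_one' := jC_inj (by rw [(exists_jC_eq ψ 1).choose_spec, map_one, map_one])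
  map_mul' a b := jC_inj (by
    rw [(exists_jC_eq ψ (a * b)).choose_spec, map_mul, map_mul,
      (exists_jC_eq ψ a).choose_spec, (exists_jC_eq ψ b).choose_spec])
  map_zero' := jC_inj (by rw [(exists_jC_eq ψ 0).choose_spec, map_zero, map_zero])
  map_add' a b := jC_inj (by
    rw [(exists_jC_eq ψ (a + b)).choose_spec, map_add, map_add,
      (exists_jC_eq ψ a).choose_spec, (exists_jC_eq ψ b).choose_spec])

lemma desc_spec (ψ : AlgebraicClosure ℚ →+* ℂ) (x : AlgebraicClosure ℚ) :
    jC (desc ψ x) = ψ x := (exists_jC_eq ψ x).choose_spec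

/-- "complex conjugation" on the algebraic closure of ℚ -/
noncomputable def conjQ : AlgebraicClosure ℚ →+* AlgebraicClosure ℚ :=
  desc ((starRingEnd ℂ).comp jC.toRingHom)

lemma conjQ_spec (x : AlgebraicClosure ℚ) :
    jC (conjQ x) = (starRingEnd ℂ) (jC x) := desc_spec _ x

lemma emb_conjQ (ψ : AlgebraicClosure ℚ →+* ℂ) {x : AlgebraicClosure ℚ} (hx : x ∈ Qsqrt2) :
    ψ (conjQ x) = (starRingEnd ℂ) (ψ x) := by
  rw [← desc_spec ψ (conjQ x), comm_Qsqrt2 (desc ψ) conjQ hx, conjQ_spec,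
    desc_spec ψ x]
end Part3
section Part4

/-- the fixed field of conjQ -/
noncomputable def fixConj : IntermediateField ℚ (AlgebraicClosure ℚ) where
  carrier := {x | conjQ x = x}
  mul_mem' ha hb := by simp only [Set.mem_setOf_eq, map_mul] at *; rw [ha, hb]
  add_mem' ha hb := by simp only [Set.mem_setOf_eq, map_add] at *; rw [ha, hb]
  one_mem' := by simp only [Set.mem_setOf_eq, map_one]
  zero_mem' := by simp only [Set.mem_setOf_eq, map_zero]
  algebraMap_mem' q := by simp only [Set.mem_setOf_eq, eq_ratCast, map_ratCast]
  inv_mem' x hx := by simp only [Set.mem_setOf_eq, map_inv₀] at *; rw [hx]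

lemma conjQ_fix_Ksqrt {x : AlgebraicClosure ℚ} (hx : x ∈ Ksqrt) : conjQ x = x := by
  have hle : Ksqrt ≤ fixConj := by
    rw [Ksqrt, IntermediateField.adjoin_le_iff]
    rintro y ⟨p, hp, hy⟩
    show conjQ y = y
    apply jC_inj
    rw [conjQ_spec]
    set z := jC y with hz
    have hz2 : z ^ 2 = (p : ℂ) := by rw [hz, ← map_pow, hy, map_natCast]
    have hfac : ((starRingEnd ℂ) z - z) * ((starRingEnd ℂ) z + z) = 0 := by
      have h1 : ((starRingEnd ℂ) z) ^ 2 = (p : ℂ) := by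
        rw [← map_pow, hz2, Complex.conj_natCast]
      linear_combination h1 - hz2
    rcases mul_eq_zero.1 hfac with h2 | h2
    · linear_combination h2
    · exfalso
      have hre : z.re = 0 := by
        have := congrArg Complex.re h2
        simp only [Complex.add_re, Complex.conj_re, Complex.zero_re] at this
        linarith
      have him : (p : ℝ) = -(z.im ^ 2) := by
        have := congrArg Complex.re hz2
        simp only [Complex.natCast_re, pow_two, Complex.mul_re, hre] at this
        rw [← this]; ring
      have hp2 : (2 : ℝ) ≤ (p : ℝ) := by exact_mod_cast hp.two_le
      nlinarith [sq_nonneg z.im]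
  exact hle hx

/-- a square root of -1 in the algebraic closure of ℚ -/
noncomputable def ii : AlgebraicClosure ℚ :=
  (IsAlgClosed.exists_pow_nat_eq (-1 : AlgebraicClosure ℚ) two_pos).choose

lemma ii_sq : ii ^ 2 = -1 :=
  (IsAlgClosed.exists_pow_nat_eq (-1 : AlgebraicClosure ℚ) two_pos).choose_spec

lemma ii_ne_zero : ii ≠ 0 := by
  intro h
  have := ii_sq
  rw [h] at this
  norm_num at this

lemma conjQ_ii : conjQ ii = -ii := by
  apply jC_inj
  rw [conjQ_spec, map_neg]
  set z := jC ii with hz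
  have hz2 : z ^ 2 = -1 := by rw [hz, ← map_pow, ii_sq, map_neg, map_one]
  have hfac : (z - Complex.I) * (z + Complex.I) = 0 := by
    linear_combination hz2 - Complex.I_sq
  rcases mul_eq_zero.1 hfac with h | h
  · have h1 : z = Complex.I := by linear_combination h
    rw [h1, Complex.conj_I]
  · have h1 : z = -Complex.I := by linear_combination h
    simp [h1]

lemma ii_mem_Qsqrt2 : ii ∈ Qsqrt2 := by
  apply mem_Qsqrt2_of_quad 0 (-1)
  rw [ii_sq]
  push_cast
  ring

lemma ii_not_mem_Ksqrt : ii ∉ Ksqrt := by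
  intro h
  have h1 := conjQ_fix_Ksqrt h
  rw [conjQ_ii] at h1
  have h2 : ii = 0 := by linear_combination -(1/2 : AlgebraicClosure ℚ) * h1
  exact ii_ne_zero h2

lemma sqrt_nat_mem_Ksqrt (n : ℕ) : ∃ w ∈ Ksqrt, w ^ 2 = (n : AlgebraicClosure ℚ) := by
  induction n using Nat.recOnMul with
  | zero => exact ⟨0, zero_mem _, by norm_num⟩
  | one => exact ⟨1, one_mem _, by norm_num⟩
  | prime p hp =>
    obtain ⟨z, hz⟩ := IsAlgClosed.exists_pow_nat_eq ((p : AlgebraicClosure ℚ)) two_pos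
    exact ⟨z, IntermediateField.subset_adjoin ℚ _ ⟨p, hp, hz⟩, hz⟩
  | mul a b ha hb =>
    obtain ⟨w1, hw1, hw1sq⟩ := ha
    obtain ⟨w2, hw2, hw2sq⟩ := hb
    exact ⟨w1 * w2, mul_mem hw1 hw2, by rw [mul_pow, hw1sq, hw2sq]; push_cast; ring⟩

lemma sqrt_rat (q : ℚ) : ∃ s t : AlgebraicClosure ℚ, s ∈ Ksqrt ∧ t ∈ Ksqrt ∧
    (s + t * ii) ^ 2 = (q : AlgebraicClosure ℚ) := by
  obtain ⟨w, hwK, hw2⟩ := sqrt_nat_mem_Ksqrt (q.num.natAbs * q.den)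
  have hd : ((q.den : ℚ) : AlgebraicClosure ℚ) ≠ 0 := by
    rw [Rat.cast_natCast]
    exact_mod_cast q.den_nz
  set w' := w * (((q.den : ℚ) : AlgebraicClosure ℚ))⁻¹ with hw'
  have hw'K : w' ∈ Ksqrt := mul_mem hwK (inv_mem (SubfieldClass.ratCast_mem _ _))
  have habs : |q| = ((q.num.natAbs * q.den : ℕ) : ℚ) / ((q.den : ℚ)) ^ 2 := by
    have h2 : |q| = |(q.num : ℚ)| / (q.den : ℚ) := by
      conv_lhs => rw [← Rat.num_div_den q]
      rw [abs_div, abs_of_pos (by exact_mod_cast q.pos : (0:ℚ) < (q.den:ℚ))]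
    rw [h2]
    push_cast [Nat.cast_natAbs]
    field_simp
  have hw'2 : w' ^ 2 = ((|q| : ℚ) : AlgebraicClosure ℚ) := by
    rw [hw', mul_pow, hw2,
      show ((|q| : ℚ) : AlgebraicClosure ℚ)
        = (((q.num.natAbs * q.den : ℕ) : ℚ) : AlgebraicClosure ℚ) / (((q.den : ℚ) : AlgebraicClosure ℚ)) ^ 2 by
          exact_mod_cast congrArg (fun r : ℚ => (r : AlgebraicClosure ℚ)) habs]
    rw [show (((q.num.natAbs * q.den : ℕ) : ℚ) : AlgebraicClosure ℚ) = ((q.num.natAbs * q.den : ℕ) : AlgebraicClosure ℚ) by push_cast; ring]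
    field_simp
  rcases le_or_gt 0 q with hq | hq
  · refine ⟨w', 0, hw'K, zero_mem _, ?_⟩
    rw [zero_mul, add_zero, hw'2, abs_of_nonneg hq]
  · refine ⟨0, w', zero_mem _, hw'K, ?_⟩
    have h3 : (0 + w' * ii) ^ 2 = w' ^ 2 * ii ^ 2 := by ring
    rw [h3, hw'2, ii_sq, abs_of_neg hq]
    push_cast
    ring
end Part4
section Part5

/-- the field K(i) described as elements of the form s + t * ii -/
noncomputable def Edec : IntermediateField ℚ (AlgebraicClosure ℚ) where
  carrier := {x | ∃ s ∈ Ksqrt, ∃ t ∈ Ksqrt, x = s + t * ii}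
  mul_mem' := by
    rintro a b ⟨s, hs, t, ht, rfl⟩ ⟨s', hs', t', ht', rfl⟩
    refine ⟨s * s' - t * t', sub_mem (mul_mem hs hs') (mul_mem ht ht'),
      s * t' + t * s', add_mem (mul_mem hs ht') (mul_mem ht hs'), ?_⟩
    linear_combination (t * t') * ii_sq
  add_mem' := by
    rintro a b ⟨s, hs, t, ht, rfl⟩ ⟨s', hs', t', ht', rfl⟩
    exact ⟨s + s', add_mem hs hs', t + t', add_mem ht ht', by ring⟩
  one_mem' := ⟨1, one_mem _, 0, zero_mem _, by ring⟩
  zero_mem' := ⟨0, zero_mem _, 0, zero_mem _, by ring⟩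
  algebraMap_mem' q := ⟨algebraMap ℚ _ q, IntermediateField.algebraMap_mem _ q, 0, zero_mem _,
    by ring⟩
  inv_mem' := by
    rintro a ⟨s, hs, t, ht, rfl⟩
    by_cases ha : s + t * ii = 0
    · rw [ha, inv_zero]
      exact ⟨0, zero_mem _, 0, zero_mem _, by ring⟩
    · have hd : s ^ 2 + t ^ 2 ≠ 0 := by
        intro hd0
        by_cases ht0 : t = 0
        · rw [ht0] at hd0
          have hs0 : s = 0 := by
            have : s ^ 2 = 0 := by linear_combination hd0
            exact pow_eq_zero_iff (n := 2) (by norm_num) |>.1 this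
          rw [hs0, ht0] at ha
          exact ha (by ring)
        · have hsq : (s * t⁻¹) ^ 2 = ii ^ 2 := by
            rw [ii_sq]
            field_simp
            linear_combination hd0
          have hfac : (s * t⁻¹ - ii) * (s * t⁻¹ + ii) = 0 := by linear_combination hsq
          rcases mul_eq_zero.1 hfac with h | h
          · have : ii = s * t⁻¹ := by linear_combination -h
            exact ii_not_mem_Ksqrt (this ▸ mul_mem hs (inv_mem ht))
          · have : ii = -(s * t⁻¹) := by linear_combination h
            exact ii_not_mem_Ksqrt (this ▸ neg_mem (mul_mem hs (inv_mem ht)))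
      refine ⟨s / (s ^ 2 + t ^ 2), div_mem hs (add_mem (pow_mem hs 2) (pow_mem ht 2)),
        -t / (s ^ 2 + t ^ 2), div_mem (neg_mem ht) (add_mem (pow_mem hs 2) (pow_mem ht 2)), ?_⟩
      have key : (s + t * ii) * (s / (s ^ 2 + t ^ 2) + -t / (s ^ 2 + t ^ 2) * ii) = 1 := by
        field_simp
        linear_combination -t^2 * ii_sq
      exact (inv_eq_of_mul_eq_one_right key).symm ▸ rfl

lemma Qsqrt2_le_Edec : Qsqrt2 ≤ Edec := by
  refine iSup₂_le fun F hF => fun x hx => ?_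
  obtain ⟨b, c, h⟩ := quad_of_mem hF hx
  obtain ⟨s, t, hs, ht, hz⟩ := sqrt_rat (c + b ^ 2 / 4)
  set z := s + t * ii with hzdef
  have hyz : (x - (b : AlgebraicClosure ℚ) / 2) ^ 2 = z ^ 2 := by
    rw [hz]
    push_cast
    linear_combination h
  have hfac : (x - (b : AlgebraicClosure ℚ) / 2 - z) * (x - (b : AlgebraicClosure ℚ) / 2 + z) = 0 := by
    linear_combination hyz
  have hb2 : ((b : AlgebraicClosure ℚ) / 2) ∈ Edec := by
    rw [show ((b : AlgebraicClosure ℚ) / 2) = ((b / 2 : ℚ) : AlgebraicClosure ℚ) by push_cast; ring]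
    exact SubfieldClass.ratCast_mem _ _
  have hzE : z ∈ Edec := ⟨s, hs, t, ht, rfl⟩
  rcases mul_eq_zero.1 hfac with h2 | h2
  · have : x = (b : AlgebraicClosure ℚ) / 2 + z := by linear_combination h2
    rw [this]
    exact add_mem hb2 hzE
  · have : x = (b : AlgebraicClosure ℚ) / 2 - z := by linear_combination h2
    rw [this]
    exact sub_mem hb2 hzE

lemma mem_Ksqrt_of_fixed {x : AlgebraicClosure ℚ} (hx : x ∈ Qsqrt2) (hfix : conjQ x = x) :
    x ∈ Ksqrt := by
  obtain ⟨s, hs, t, ht, rfl⟩ := Qsqrt2_le_Edec hx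
  have hc : conjQ (s + t * ii) = s - t * ii := by
    rw [map_add, map_mul, conjQ_fix_Ksqrt hs, conjQ_fix_Ksqrt ht, conjQ_ii]
    ring
  rw [hc] at hfix
  have h2 : t * ii = 0 := by linear_combination -(1/2 : AlgebraicClosure ℚ) * hfix
  rcases mul_eq_zero.1 h2 with h3 | h3
  · rw [h3, zero_mul, add_zero]
    exact hs
  · exact absurd h3 ii_ne_zero
end Part5
section Part6

set_option synthInstance.maxHeartbeats 1000000 in
set_option maxHeartbeats 1000000 in
lemma exists_pow_unit_conj_eq_one {u : AlgebraicClosure ℚ} (hu : u ∈ Qsqrt2) (hu0 : u ≠ 0)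
    (hint : IsIntegral ℤ u) (hinv : IsIntegral ℤ u⁻¹) :
    ∃ n : ℕ, 0 < n ∧ (u * (conjQ u)⁻¹) ^ n = 1 := by
  set v : AlgebraicClosure ℚ := u * (conjQ u)⁻¹ with hv
  haveI : Finite ↥({u, conjQ u} : Set (AlgebraicClosure ℚ)) :=
    (Set.finite_singleton (conjQ u)).insert u |>.to_subtype
  set F := IntermediateField.adjoin ℚ ({u, conjQ u} : Set (AlgebraicClosure ℚ)) with hF
  haveI : FiniteDimensional ℚ F :=
    IntermediateField.finiteDimensional_adjoin
      (fun x _ => (Algebra.IsAlgebraic.isAlgebraic (R := ℚ) x).isIntegral)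
  haveI : NumberField F := { to_charZero := inferInstance, to_finiteDimensional := inferInstance }
  have huF : u ∈ F := IntermediateField.subset_adjoin ℚ _ (by simp)
  have hcuF : conjQ u ∈ F := IntermediateField.subset_adjoin ℚ _ (by simp)
  have hvF : v ∈ F := mul_mem huF (inv_mem hcuF)
  set vF : F := ⟨v, hvF⟩ with hvFdef
  have hvint : IsIntegral ℤ vF := by
    rw [← isIntegral_algebraMap_iff (algebraMap F (AlgebraicClosure ℚ)).injective]
    show IsIntegral ℤ v
    have h1 : IsIntegral ℤ (conjQ u)⁻¹ := by
      rw [← map_inv₀]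
      exact hinv.map conjQ.toIntAlgHom
    exact hint.mul h1
  have hnorm : ∀ φ : F →+* ℂ, ‖φ vF‖ = 1 := by
    intro φ
    letI : Algebra F ℂ := φ.toAlgebra
    let ψalg : AlgebraicClosure ℚ →ₐ[F] ℂ := IsAlgClosed.lift
    set ψ : AlgebraicClosure ℚ →+* ℂ := ψalg.toRingHom with hψ
    have hψφ : φ vF = ψ v := by
      have := ψalg.commutes vF
      rw [show algebraMap F ℂ vF = φ vF from rfl] at this
      rw [← this]
      rfl
    rw [hψφ, hv, map_mul, map_inv₀, emb_conjQ ψ hu]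
    have hψu : ψ u ≠ 0 := by
      intro h
      exact hu0 (ψ.injective (by rw [h, map_zero]))
    rw [norm_mul, norm_inv, RCLike.norm_conj]
    field_simp
  obtain ⟨n, hn, hpow⟩ := NumberField.Embeddings.pow_eq_one_of_norm_eq_one F ℂ hvint hnorm
  refine ⟨n, hn, ?_⟩
  have := congrArg (fun y : F => (y : AlgebraicClosure ℚ)) hpow
  push_cast at this
  exact this
end Part6

section Part7

lemma pow_card_rootsOfUnity {v : ↥Qsqrt2} (hv0 : v ≠ 0)
    {n : ℕ} (hn : 0 < n) (hvn : v ^ n = 1) :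
    v ^ (Nat.card {x : ↥Qsqrt2 | ∃ n : ℕ, 0 < n ∧ x ^ n = 1}) = 1 := by
  set T := {x : ↥Qsqrt2 | ∃ n : ℕ, 0 < n ∧ x ^ n = 1} with hT
  set H := CommGroup.torsion (↥Qsqrt2)ˣ with hH
  have e : ↥H ≃ ↥T := by
    refine ⟨fun g => ⟨((g : (↥Qsqrt2)ˣ) : ↥Qsqrt2), ?_⟩, fun x => ⟨Units.mk0 x.1 ?_, ?_⟩, ?_, ?_⟩
    · obtain ⟨m, hm, hgm⟩ := isOfFinOrder_iff_pow_eq_one.1 ((CommGroup.mem_torsion _).1 g.2)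
      exact ⟨m, hm, by rw [← Units.val_pow_eq_pow_val, hgm, Units.val_one]⟩
    · obtain ⟨m, hm, hxm⟩ := x.2
      intro h0
      rw [h0, zero_pow hm.ne'] at hxm
      exact zero_ne_one hxm
    · obtain ⟨m, hm, hxm⟩ := x.2
      refine (CommGroup.mem_torsion _).2 (isOfFinOrder_iff_pow_eq_one.2 ⟨m, hm, ?_⟩)
      apply Units.ext
      rw [Units.val_pow_eq_pow_val, Units.val_one]
      exact hxm
    · intro g
      apply Subtype.ext
      apply Units.ext
      rfl
    · intro x
      apply Subtype.ext
      rfl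
  have hcard : Nat.card ↥T = Nat.card ↥H := Nat.card_congr e.symm
  have hvU : Units.mk0 v hv0 ∈ H := by
    refine (CommGroup.mem_torsion _).2 (isOfFinOrder_iff_pow_eq_one.2 ⟨n, hn, ?_⟩)
    apply Units.ext
    rw [Units.val_pow_eq_pow_val, Units.val_one]
    exact hvn
  set g : ↥H := ⟨Units.mk0 v hv0, hvU⟩ with hg
  have hdvd : orderOf g ∣ Nat.card ↥T := hcard ▸ orderOf_dvd_natCard g
  have hgN : g ^ (Nat.card ↥T) = 1 := orderOf_dvd_iff_pow_eq_one.1 hdvd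
  have h1 : (Units.mk0 v hv0) ^ (Nat.card ↥T) = 1 := by
    have := congrArg (fun y : ↥H => (y : (↥Qsqrt2)ˣ)) hgN
    simpa using this
  have h2 := congrArg (fun y : (↥Qsqrt2)ˣ => (y : ↥Qsqrt2)) h1
  simpa using h2
end Part7

/-- If `N` is the order of the group of roots of unity of `L = ℚ^(2)` and `u` is a unit
of the ring of integers of `L` (i.e. both `u` and `u⁻¹` are integral over `ℤ`), then
`u ^ (2 * N)` lies in `K = ℚ({√p : p prime})` and is a unit of the ring of integers
of `K`. -/
theorem pow_two_mul_card_rootsOfUnity_mem_Ksqrt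
    (N : ℕ) (hN : N = Nat.card {x : ↥Qsqrt2 | ∃ n : ℕ, 0 < n ∧ x ^ n = 1})
    (u : AlgebraicClosure ℚ) (hu : u ∈ Qsqrt2)
    (hint : IsIntegral ℤ u) (hinv : IsIntegral ℤ u⁻¹) :
    u ^ (2 * N) ∈ Ksqrt ∧ IsIntegral ℤ (u ^ (2 * N)) ∧ IsIntegral ℤ (u ^ (2 * N))⁻¹ := by
  refine ⟨?_, hint.pow _, by rw [← inv_pow]; exact hinv.pow _⟩
  by_cases hu0 : u = 0
  · subst hu0
    by_cases h2N : 2 * N = 0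
    · rw [h2N, pow_zero]
      exact one_mem _
    · rw [zero_pow h2N]
      exact zero_mem _
  · -- the main case
    obtain ⟨n, hn, hvn⟩ := exists_pow_unit_conj_eq_one hu hu0 hint hinv
    have hcu : conjQ u ∈ Qsqrt2 := map_mem_Qsqrt2 conjQ hu
    have hvQ : u * (conjQ u)⁻¹ ∈ Qsqrt2 := mul_mem hu (inv_mem hcu)
    have hcu0 : conjQ u ≠ 0 := fun h => hu0 (by
      have := congrArg conjQ h
      rw [invol_Qsqrt2 conjQ hu, map_zero] at this
      exact this)
    have hv0 : u * (conjQ u)⁻¹ ≠ 0 := mul_ne_zero hu0 (inv_ne_zero hcu0)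
    set vL : ↥Qsqrt2 := ⟨u * (conjQ u)⁻¹, hvQ⟩ with hvL
    have hvL0 : vL ≠ 0 := fun h => hv0 (by
      have := congrArg (fun y : ↥Qsqrt2 => (y : AlgebraicClosure ℚ)) h
      exact this)
    have hvLn : vL ^ n = 1 := by
      apply Subtype.ext
      push_cast
      exact hvn
    have hvN := pow_card_rootsOfUnity hvL0 hn hvLn
    rw [← hN] at hvN
    have hvNQ : (u * (conjQ u)⁻¹) ^ N = 1 := by
      have := congrArg (fun y : ↥Qsqrt2 => (y : AlgebraicClosure ℚ)) hvN
      push_cast at this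
      exact this
    have huN : conjQ (u ^ N) = u ^ N := by
      rw [map_pow]
      have h1 : u ^ N * ((conjQ u) ^ N)⁻¹ = 1 := by
        rw [← inv_pow, ← mul_pow]
        exact hvNQ
      have h2 : (conjQ u) ^ N ≠ 0 := pow_ne_zero _ hcu0
      field_simp at h1
      exact h1.symm
    have hmem : u ^ N ∈ Ksqrt := mem_Ksqrt_of_fixed (pow_mem hu N) huN
    rw [mul_comm 2 N, pow_mul]
    exact pow_mem hmem 2
end

section
/- Let m ≥ 3 be an integer and let ζ ∈ ℂ be a primitive m-th root of unity. Then 2 + ζ + ζ⁻¹ is a real algebraic integer and every root in ℂ of its minimal polynomial over ℚ is real and lies strictly between 0 and 4. -/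
/-!
A primitive `m`-th root of unity `ξ ∈ ℂ` lies on the unit circle, so `ξ⁻¹ = conj ξ` and
`2 + ξ + ξ⁻¹ = 2 + 2 Re ξ`; for `m ≥ 3` we have `ξ ≠ ±1`, hence `|Re ξ| < 1` and this number
lies in `(0, 4)`. Every conjugate of `2 + ζ + ζ⁻¹` is its image under an embedding
`ℚ(ζ) → ℂ`, i.e. `2 + ξ + ξ⁻¹` for another primitive `m`-th root of unity `ξ`.
-/

open Polynomial IntermediateField

namespace Complex

theorem add_inv_of_norm_eq_one {ξ : ℂ} (h : ‖ξ‖ = 1) : ξ + ξ⁻¹ = (2 * ξ.re : ℝ) := by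
  rw [inv_eq_conj h, add_conj]

theorem abs_re_lt_one_of_norm_eq_one {ξ : ℂ} (h : ‖ξ‖ = 1) (h₁ : ξ ≠ 1) (h₂ : ξ ≠ -1) :
    |ξ.re| < 1 := by
  refine lt_of_le_of_ne (h ▸ abs_re_le_norm ξ) fun habs => ?_
  have him : ξ.im = 0 := abs_re_eq_norm.mp (habs.trans h.symm)
  rcases (abs_eq zero_le_one).mp habs with hre | hre
  · exact h₁ (ext (by simp [hre]) (by simp [him]))
  · exact h₂ (ext (by simp [hre]) (by simp [him]))

end Complex

namespace IsPrimitiveRoot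

variable {m : ℕ}

theorem isIntegral_two_add_add_inv {L : Type*} [Field L] {ζ : L} (h : IsPrimitiveRoot ζ m)
    (hm : m ≠ 0) : IsIntegral ℤ (2 + ζ + ζ⁻¹) :=
  have hm : 0 < m := Nat.pos_of_ne_zero hm
  ((isIntegral_natCast 2 : IsIntegral ℤ ((2 : ℕ) : L)).add (h.isIntegral hm)).add
    (h.inv.isIntegral hm)

theorem exists_eq_two_add_add_inv_of_aeval_minpoly {K L : Type*} [Field K] [Field L]
    [Algebra K L] [IsAlgClosed L] {ζ z : L} (h : IsPrimitiveRoot ζ m) (hm : m ≠ 0)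
    (hz : aeval z (minpoly K (2 + ζ + ζ⁻¹)) = 0) :
    ∃ ξ : L, IsPrimitiveRoot ξ m ∧ z = 2 + ξ + ξ⁻¹ := by
  have hζ : ζ ∈ K⟮ζ⟯ := mem_adjoin_simple_self K ζ
  have hx : 2 + ζ + ζ⁻¹ ∈ K⟮ζ⟯ := add_mem (add_mem (ofNat_mem _ 2) hζ) (inv_mem hζ)
  have hsplits : ∀ s ∈ ({ζ} : Set L),
      IsIntegral K s ∧ ((minpoly K s).map (algebraMap K L)).Splits := by
    rintro s rfl
    exact ⟨(h.isIntegral (Nat.pos_of_ne_zero hm)).tower_top, IsAlgClosed.splits _⟩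
  obtain ⟨φ, hφ⟩ := exists_algHom_adjoin_of_splits_of_aeval hsplits hx hz
  have hgen : IsPrimitiveRoot (⟨ζ, hζ⟩ : K⟮ζ⟯) m :=
    h.of_map_of_injective (f := K⟮ζ⟯.val) Subtype.val_injective
  refine ⟨φ ⟨ζ, hζ⟩, hgen.map_of_injective φ.injective, ?_⟩
  have hx_eq : (⟨2 + ζ + ζ⁻¹, hx⟩ : K⟮ζ⟯) = 2 + ⟨ζ, hζ⟩ + (⟨ζ, hζ⟩ : K⟮ζ⟯)⁻¹ := rfl
  rw [← hφ, hx_eq, map_add, map_add, map_inv₀, map_ofNat]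

theorem im_two_add_add_inv {ξ : ℂ} (h : IsPrimitiveRoot ξ m) (hm : m ≠ 0) :
    (2 + ξ + ξ⁻¹).im = 0 := by
  rw [add_assoc, Complex.add_inv_of_norm_eq_one (h.norm'_eq_one hm)]
  simp

theorem re_two_add_add_inv_mem_Ioo {ξ : ℂ} (h : IsPrimitiveRoot ξ m) (hm : 3 ≤ m) :
    (2 + ξ + ξ⁻¹).re ∈ Set.Ioo 0 4 := by
  have hnorm : ‖ξ‖ = 1 := h.norm'_eq_one (by omega)
  have hne_neg_one : ξ ≠ -1 := by
    rintro rfl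
    have := h.eq_orderOf
    rw [orderOf_neg_one, ringChar.eq ℂ 0] at this
    norm_num at this
    omega
  have hre := abs_lt.mp <|
    Complex.abs_re_lt_one_of_norm_eq_one hnorm (h.ne_one (by omega)) hne_neg_one
  rw [add_assoc, Complex.add_inv_of_norm_eq_one hnorm]
  simp only [Complex.add_re, Complex.re_ofNat, Complex.ofReal_re, Set.mem_Ioo]
  constructor <;> linarith

end IsPrimitiveRoot

/-- If `ζ ∈ ℂ` is a primitive `m`-th root of unity with `m ≥ 3`, then `2 + ζ + ζ⁻¹` is a
real algebraic integer all of whose conjugates (the roots in `ℂ` of its minimal polynomial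
over `ℚ`) are real and lie strictly between `0` and `4`. -/
theorem two_add_zeta_add_zeta_inv_totally_positive
    (m : ℕ) (hm : 3 ≤ m) (ζ : ℂ) (hζ : orderOf ζ = m) :
    IsIntegral ℤ (2 + ζ + ζ⁻¹) ∧ (2 + ζ + ζ⁻¹).im = 0 ∧
    ∀ z : ℂ, Polynomial.aeval z (minpoly ℚ (2 + ζ + ζ⁻¹)) = 0 →
      z.im = 0 ∧ 0 < z.re ∧ z.re < 4 := by
  have h : IsPrimitiveRoot ζ m := IsPrimitiveRoot.iff_orderOf.mpr hζ
  have hm0 : m ≠ 0 := by omega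
  refine ⟨h.isIntegral_two_add_add_inv hm0, h.im_two_add_add_inv hm0, fun z hz => ?_⟩
  obtain ⟨ξ, hξ, rfl⟩ := h.exists_eq_two_add_add_inv_of_aeval_minpoly hm0 hz
  exact ⟨hξ.im_two_add_add_inv hm0, hξ.re_two_add_add_inv_mem_Ioo hm⟩
end

section
/- Let K be a number field inside ℚ̄ and let d ≥ 1. The field K^(d), the compositum inside ℚ̄ of all extension fields F of K with [F:K] ≤ d, is a Galois extension of K, and every element of Gal(K^(d)/K) has order dividing d!. -/
/-!
An automorphism `σ` over `k` permutes the roots of the minimal polynomial of any `x`; if that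
polynomial has degree at most `d`, this permutation lives in a symmetric group on at most `d`
letters, so `σ ^ d!` fixes `x`. Inside a Galois extension `Ω/k` the compositum `k^(d)` of all
subextensions of degree at most `d` is stable under `Gal(Ω/k)`, hence Galois, and every
automorphism of `k^(d)` is the restriction of some `τ ∈ Gal(Ω/k)`. Since `τ ^ d!` fixes every
element of degree at most `d`, it fixes `k^(d)`.
-/

open IntermediateField Polynomial Nat

theorem AlgEquiv.pow_factorial_apply_eq_self {K L : Type*} [Field K] [Field L] [Algebra K L]
    (σ : L ≃ₐ[K] L) {x : L} (hx : IsIntegral K x) {d : ℕ}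
    (hdeg : (minpoly K x).natDegree ≤ d) : (σ ^ d !) x = x := by
  set p := minpoly K x
  have hσ : Set.MapsTo σ (p.rootSet L) (p.rootSet L) := rootSet_mapsTo σ.toAlgHom
  have hx_root : x ∈ p.rootSet L := mem_rootSet.2 ⟨minpoly.ne_zero hx, minpoly.aeval K x⟩
  have hcard : Fintype.card (p.rootSet L) ≤ d := by
    rw [← Nat.card_eq_fintype_card, Nat.card_coe_set_eq]
    exact (ncard_rootSet_le p L).trans hdeg
  have hperiodic : Function.IsPeriodicPt (hσ.restrict σ _ _) d ! ⟨x, hx_root⟩ :=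
    (Function.isPeriodicPt_factorial_card_of_mem_periodicPts
      ((hσ.restrict_inj.2 (σ.injective.injOn)).mem_periodicPts _)).trans_dvd
      (factorial_dvd_factorial hcard)
  simpa [Function.IsPeriodicPt, Function.IsFixedPt, hσ.iterate_restrict, Subtype.ext_iff]
    using hperiodic

variable (k Ω : Type*) [Field k] [Field Ω] [Algebra k Ω]

namespace IntermediateField

noncomputable def compositumOfRankLE (d : ℕ) : IntermediateField k Ω :=
  ⨆ F ∈ {F : IntermediateField k Ω | Module.rank k F ≤ d}, F

variable {k Ω} {d : ℕ}

theorem le_compositumOfRankLE {F : IntermediateField k Ω} (hF : Module.rank k F ≤ d) :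
    F ≤ compositumOfRankLE k Ω d :=
  le_iSup₂ (f := fun (F : IntermediateField k Ω) (_ : Module.rank k F ≤ d) => F) F hF

theorem map_compositumOfRankLE_le (σ : Ω →ₐ[k] Ω) :
    (compositumOfRankLE k Ω d).map σ ≤ compositumOfRankLE k Ω d := by
  simp only [compositumOfRankLE, map_iSup]
  refine iSup₂_le fun F hF => le_compositumOfRankLE ?_
  rwa [← (F.equivMap σ).toLinearEquiv.rank_eq]

instance normal_compositumOfRankLE [Normal k Ω] : Normal k (compositumOfRankLE k Ω d) :=
  normal_iff_forall_map_le.2 map_compositumOfRankLE_le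

instance isGalois_compositumOfRankLE [IsGalois k Ω] : IsGalois k (compositumOfRankLE k Ω d) :=
  ⟨⟩

theorem isIntegral_and_natDegree_minpoly_le_of_mem {F : IntermediateField k Ω}
    (hF : Module.rank k F ≤ d) {x : Ω} (hx : x ∈ F) :
    IsIntegral k x ∧ (minpoly k x).natDegree ≤ d := by
  have : FiniteDimensional k F :=
    Module.rank_lt_aleph0_iff.1 (hF.trans_lt Cardinal.natCast_lt_aleph0)
  refine ⟨(IsIntegral.of_finite k (⟨x, hx⟩ : F)).map F.val, ?_⟩
  rw [← minpoly_eq ⟨x, hx⟩]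
  exact (minpoly.natDegree_le _).trans (Module.finrank_le_of_rank_le hF)

theorem pow_factorial_mem_fixingSubgroup_compositumOfRankLE (τ : Ω ≃ₐ[k] Ω) :
    τ ^ d ! ∈ (compositumOfRankLE k Ω d).fixingSubgroup := by
  rw [← Subgroup.zpowers_le, ← le_iff_le]
  refine iSup₂_le fun F hF => (le_iff_le _ _).2 (Subgroup.zpowers_le.2 ?_)
  rw [mem_fixingSubgroup_iff]
  intro x hx
  obtain ⟨hint, hdeg⟩ := isIntegral_and_natDegree_minpoly_le_of_mem hF hx
  exact τ.pow_factorial_apply_eq_self hint hdeg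

theorem pow_factorial_eq_one_of_compositumOfRankLE [Normal k Ω]
    (σ : compositumOfRankLE k Ω d ≃ₐ[k] compositumOfRankLE k Ω d) : σ ^ d ! = 1 := by
  obtain ⟨τ, rfl⟩ := AlgEquiv.restrictNormalHom_surjective Ω σ
  rw [← map_pow, ← MonoidHom.mem_ker, restrictNormalHom_ker]
  exact pow_factorial_mem_fixingSubgroup_compositumOfRankLE τ

end IntermediateField

/- The `ℚ`-algebra structure on `AlgebraicClosure ℚ` found by elaboration is
`DivisionRing.toRatAlgebra`, which is defeq but not reducibly defeq to the one carried by the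
library instances about `AlgebraicClosure ℚ`. -/
instance IntermediateField.isGalois_algebraicClosure_rat
    (K : IntermediateField ℚ (AlgebraicClosure ℚ)) : IsGalois K (AlgebraicClosure ℚ) :=
  have : Algebra.IsAlgebraic ℚ (AlgebraicClosure ℚ) := AlgebraicClosure.isAlgebraic ℚ
  have : IsAlgClosure K (AlgebraicClosure ℚ) := ⟨inferInstance, .tower_top (K := ℚ) K⟩
  ⟨⟩

theorem compositum_deg_le_d_galois_and_exponent_dvd_factorial_general
    (K : IntermediateField ℚ (AlgebraicClosure ℚ))
    (d : ℕ) :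
    IsGalois ↥K
      ↥(⨆ F ∈ {F : IntermediateField ↥K (AlgebraicClosure ℚ) |
          Module.rank ↥K F ≤ d}, F) ∧
    ∀ σ : ↥(⨆ F ∈ {F : IntermediateField ↥K (AlgebraicClosure ℚ) |
          Module.rank ↥K F ≤ d}, F) ≃ₐ[↥K]
        ↥(⨆ F ∈ {F : IntermediateField ↥K (AlgebraicClosure ℚ) |
          Module.rank ↥K F ≤ d}, F),
      σ ^ d.factorial = 1 :=
  ⟨isGalois_compositumOfRankLE, pow_factorial_eq_one_of_compositumOfRankLE⟩

/-- For a number field `K` inside a fixed algebraic closure of `ℚ` and `d ≥ 1`, the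
compositum `K^(d)` of all extensions of `K` of degree at most `d` is Galois over `K`, and
every element of `Gal(K^(d)/K)` has order dividing `d!`. -/
theorem compositum_deg_le_d_galois_and_exponent_dvd_factorial
    (K : IntermediateField ℚ (AlgebraicClosure ℚ))
    (hK : FiniteDimensional ℚ K)
    (d : ℕ) (hd : 1 ≤ d) :
    IsGalois ↥K
      ↥(⨆ F ∈ {F : IntermediateField ↥K (AlgebraicClosure ℚ) |
          Module.rank ↥K F ≤ d}, F) ∧
    ∀ σ : ↥(⨆ F ∈ {F : IntermediateField ↥K (AlgebraicClosure ℚ) |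
          Module.rank ↥K F ≤ d}, F) ≃ₐ[↥K]
        ↥(⨆ F ∈ {F : IntermediateField ↥K (AlgebraicClosure ℚ) |
          Module.rank ↥K F ≤ d}, F),
      σ ^ d.factorial = 1 :=
  compositum_deg_le_d_galois_and_exponent_dvd_factorial_general K d
end
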